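/- arXiv:2105.04522 — 5 statements merged into one kernel-verified Lean document; each statement's English description precedes it below -/
import Mathlib

section
/- For fixed π₁ ∈ (0,1) and any probability vectors p₂,…,p_M on K classes (M ≥ 3), ∑_{k=1}^K D_GJS_π(e_k, p₂,…,p_M) ≥ ∑_{k=1}^K D_JS_{π'}(e_k, u), where u is the uniform distribution, π' = [π₁, 1−π₁], with equality if and only if p₂ = ⋯ = p_M = u. -/
/-! Write `a = w 0`, `η = negMulLog`, and `r` for the mixture of the `pᵢ` (`i ≠ 0`) with the
renormalised weights `wᵢ / (1 - a)`. Each summand splits as `D_JS(e_k, r) + (1 - a) D_GJS(p)`.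
The generalized term is a Jensen gap of the strictly concave `η`, so it is nonnegative and vanishes
iff every `pᵢ = r`. On the other hand `D_JS(e_k, r) = φ((1 - a) r_k) + η(1 - a)` with
`φ x = η(a + x) - η x` strictly convex, so by Jensen over `k` the sum `∑ₖ D_JS(e_k, r)` is
minimal exactly at `r = u`. -/

open Real Finset

/-- Shannon entropy of a finite probability vector (convention `0 * log 0 = 0`). -/
noncomputable def shannonH {K : ℕ} (p : Fin K → ℝ) : ℝ := ∑ k, -(p k * Real.log (p k))

/-- One-hot probability vector at class `c`. -/
noncomputable def onehot {K : ℕ} (c : Fin K) : Fin K → ℝ := fun k => if k = c then 1 else 0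

-- `jsDiv a p q` is `D_JS` with weights `(a, 1 - a)`; `gjsDiv t v p` is `D_GJS` of `(p i)_{i ∈ t}`
-- with weights `v`.
noncomputable def jsDiv {K : ℕ} (a : ℝ) (p q : Fin K → ℝ) : ℝ :=
  shannonH (fun j => a * p j + (1 - a) * q j) - a * shannonH p - (1 - a) * shannonH q

noncomputable def gjsDiv {ι : Type*} {K : ℕ} (t : Finset ι) (v : ι → ℝ) (p : ι → Fin K → ℝ) :
    ℝ :=
  shannonH (fun j => ∑ i ∈ t, v i * p i j) - ∑ i ∈ t, v i * shannonH (p i)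

section Entropy

variable {K : ℕ}

lemma shannonH_eq_sum_negMulLog (p : Fin K → ℝ) : shannonH p = ∑ j, negMulLog (p j) := by
  simp [shannonH, negMulLog, neg_mul]

lemma shannonH_onehot (c : Fin K) : shannonH (onehot c) = 0 := by
  simp [shannonH_eq_sum_negMulLog, onehot, apply_ite negMulLog]

lemma shannonH_const_mul (c : ℝ) {r : Fin K → ℝ} (hr : ∑ j, r j = 1) :
    shannonH (fun j => c * r j) = negMulLog c + c * shannonH r := by
  simp only [shannonH_eq_sum_negMulLog, negMulLog_mul, sum_add_distrib, ← sum_mul, ← mul_sum, hr,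
    one_mul]

lemma shannonH_mul_onehot_add (a : ℝ) (c : Fin K) (q : Fin K → ℝ) :
    shannonH (fun j => a * onehot c j + q j) =
      negMulLog (a + q c) - negMulLog (q c) + shannonH q := by
  have h : ∀ j, negMulLog (a * onehot c j + q j) =
      (if j = c then negMulLog (a + q j) - negMulLog (q j) else 0) + negMulLog (q j) := by
    intro j
    by_cases hj : j = c <;> simp [onehot, hj]
  simp only [shannonH_eq_sum_negMulLog, h, sum_add_distrib, sum_ite_eq', mem_univ, if_true]

lemma jsDiv_onehot (a : ℝ) (c : Fin K) {r : Fin K → ℝ} (hr : ∑ j, r j = 1) :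
    jsDiv a (onehot c) r =
      negMulLog (a + (1 - a) * r c) - negMulLog ((1 - a) * r c) + negMulLog (1 - a) := by
  rw [jsDiv, shannonH_mul_onehot_add a c (fun j => (1 - a) * r j), shannonH_const_mul _ hr,
    shannonH_onehot]
  ring

lemma strictConvexOn_negMulLog_add_sub_negMulLog {c : ℝ} (hc : 0 < c) :
    StrictConvexOn ℝ (Set.Ici 0) (fun x => negMulLog (c + x) - negMulLog x) := by
  have hderiv : ∀ x : ℝ, 0 < x →
      deriv (fun x => negMulLog (c + x) - negMulLog x) x = log x - log (c + x) := by
    intro x hx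
    have hshift : HasDerivAt (fun x => negMulLog (c + x)) (-log (c + x) - 1) x :=
      ((hasDerivAt_negMulLog (by positivity)).comp x
        ((hasDerivAt_id x).const_add c)).congr_deriv (mul_one _)
    refine (hshift.sub (hasDerivAt_negMulLog hx.ne')).deriv.trans ?_
    ring
  refine StrictMonoOn.strictConvexOn_of_deriv (convex_Ici 0) (by fun_prop) ?_
  rw [interior_Ici]
  intro x (hx : 0 < x) y (hy : 0 < y) hxy
  rw [hderiv x hx, hderiv y hy, ← log_div hx.ne' (by positivity),
    ← log_div hy.ne' (by positivity)]
  apply log_lt_log (by positivity)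
  rw [div_lt_div_iff₀ (by positivity) (by positivity)]
  nlinarith

section UniformJensen

variable {ι : Type*} [Fintype ι] [Nonempty ι] {s : Set ℝ} {f : ℝ → ℝ} {x : ι → ℝ}

lemma ConvexOn.card_mul_map_mean_le_sum (hf : ConvexOn ℝ s f) (hx : ∀ i, x i ∈ s) :
    Fintype.card ι * f ((∑ i, x i) / Fintype.card ι) ≤ ∑ i, f (x i) := by
  have hn : (0 : ℝ) < Fintype.card ι := by exact_mod_cast Fintype.card_pos
  have h := hf.map_sum_le (t := univ) (w := fun _ => (Fintype.card ι : ℝ)⁻¹)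
    (fun _ _ => by positivity) (by simp [hn.ne']) (fun i _ => hx i)
  simp only [smul_eq_mul, ← mul_sum] at h
  rw [inv_mul_eq_div] at h
  calc Fintype.card ι * f ((∑ i, x i) / Fintype.card ι)
      ≤ Fintype.card ι * ((Fintype.card ι : ℝ)⁻¹ * ∑ i, f (x i)) := by gcongr
    _ = ∑ i, f (x i) := by field_simp

lemma StrictConvexOn.sum_eq_card_mul_map_mean_iff (hf : StrictConvexOn ℝ s f)
    (hx : ∀ i, x i ∈ s) :
    ∑ i, f (x i) = Fintype.card ι * f ((∑ i, x i) / Fintype.card ι) ↔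
      ∀ i, x i = (∑ i, x i) / Fintype.card ι := by
  have hn : (0 : ℝ) < Fintype.card ι := by exact_mod_cast Fintype.card_pos
  have h := hf.map_sum_eq_iff (t := univ) (w := fun _ => (Fintype.card ι : ℝ)⁻¹) (p := x)
    (fun _ _ => by positivity) (by simp [hn.ne']) (fun i _ => hx i)
  rw [← smul_sum, ← smul_sum] at h
  simp only [smul_eq_mul, inv_mul_eq_div, mem_univ, true_implies] at h
  rw [← h, eq_comm, eq_div_iff hn.ne', mul_comm]

end UniformJensen

section JensenShannon

variable {K : ℕ} {a : ℝ} {r : Fin K → ℝ}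

lemma sum_jsDiv_onehot (hr : ∑ j, r j = 1) :
    ∑ k, jsDiv a (onehot k) r =
      ∑ k, (negMulLog (a + (1 - a) * r k) - negMulLog ((1 - a) * r k)) +
        K * negMulLog (1 - a) := by
  simp [jsDiv_onehot a _ hr, sum_add_distrib]

lemma sum_jsDiv_onehot_uniform (hK : K ≠ 0) :
    ∑ k, jsDiv a (onehot k) (fun _ : Fin K => (1 : ℝ) / K) =
      K * (negMulLog (a + (1 - a) / K) - negMulLog ((1 - a) / K)) + K * negMulLog (1 - a) := by
  rw [sum_jsDiv_onehot (by simp [hK] : ∑ _ : Fin K, (1 : ℝ) / K = 1)]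
  simp only [mul_one_div, sum_const, card_univ, Fintype.card_fin, nsmul_eq_mul]

lemma sum_jsDiv_onehot_uniform_le (ha0 : 0 < a) (ha1 : a < 1) (hr0 : ∀ k, 0 ≤ r k)
    (hr1 : ∑ k, r k = 1) :
    ∑ k, jsDiv a (onehot k) (fun _ : Fin K => (1 : ℝ) / K) ≤ ∑ k, jsDiv a (onehot k) r := by
  have hK : K ≠ 0 := by rintro rfl; simp at hr1
  have : NeZero K := ⟨hK⟩
  have hmean : (∑ k, (1 - a) * r k) / Fintype.card (Fin K) = (1 - a) / K := by
    rw [← mul_sum, hr1, mul_one, Fintype.card_fin]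
  have h := (strictConvexOn_negMulLog_add_sub_negMulLog ha0).convexOn.card_mul_map_mean_le_sum
    (x := fun k => (1 - a) * r k) fun k => mul_nonneg (by linarith) (hr0 k)
  rw [hmean, Fintype.card_fin] at h
  rw [sum_jsDiv_onehot hr1, sum_jsDiv_onehot_uniform hK]
  exact add_le_add_left h _

lemma sum_jsDiv_onehot_eq_uniform_iff (ha0 : 0 < a) (ha1 : a < 1) (hr0 : ∀ k, 0 ≤ r k)
    (hr1 : ∑ k, r k = 1) :
    ∑ k, jsDiv a (onehot k) r = ∑ k, jsDiv a (onehot k) (fun _ : Fin K => (1 : ℝ) / K) ↔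
      r = fun _ : Fin K => (1 : ℝ) / K := by
  have hK : K ≠ 0 := by rintro rfl; simp at hr1
  have : NeZero K := ⟨hK⟩
  have hmean : (∑ k, (1 - a) * r k) / Fintype.card (Fin K) = (1 - a) * (1 / K) := by
    rw [← mul_sum, hr1, mul_one, Fintype.card_fin, mul_one_div]
  have h := (strictConvexOn_negMulLog_add_sub_negMulLog ha0).sum_eq_card_mul_map_mean_iff
    (x := fun k => (1 - a) * r k) fun k => mul_nonneg (by linarith) (hr0 k)
  rw [hmean, Fintype.card_fin] at h
  rw [sum_jsDiv_onehot hr1, sum_jsDiv_onehot_uniform hK, ← mul_one_div (1 - a), add_left_inj,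
    h, funext_iff]
  simp only [mul_right_inj' (sub_ne_zero.2 ha1.ne')]

end JensenShannon

section GeneralizedJensenShannon

variable {ι : Type*} {K : ℕ} {t : Finset ι} {v : ι → ℝ}

lemma sum_mul_negMulLog_le_negMulLog_sum (hv0 : ∀ i ∈ t, 0 ≤ v i) (hv1 : ∑ i ∈ t, v i = 1)
    {x : ι → ℝ} (hx : ∀ i ∈ t, 0 ≤ x i) :
    ∑ i ∈ t, v i * negMulLog (x i) ≤ negMulLog (∑ i ∈ t, v i * x i) := by
  simpa only [smul_eq_mul] using concaveOn_negMulLog.le_map_sum hv0 hv1 hx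

lemma gjsDiv_eq_sum (t : Finset ι) (v : ι → ℝ) (p : ι → Fin K → ℝ) :
    gjsDiv t v p =
      ∑ j, (negMulLog (∑ i ∈ t, v i * p i j) - ∑ i ∈ t, v i * negMulLog (p i j)) := by
  simp only [gjsDiv, shannonH_eq_sum_negMulLog, mul_sum, sum_sub_distrib]
  rw [sum_comm (s := t)]

variable {p : ι → Fin K → ℝ}

lemma gjsDiv_nonneg (hv0 : ∀ i ∈ t, 0 ≤ v i) (hv1 : ∑ i ∈ t, v i = 1)
    (hp : ∀ i ∈ t, ∀ j, 0 ≤ p i j) : 0 ≤ gjsDiv t v p := by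
  rw [gjsDiv_eq_sum]
  exact sum_nonneg fun j _ =>
    sub_nonneg.2 (sum_mul_negMulLog_le_negMulLog_sum hv0 hv1 fun i hi => hp i hi j)

lemma gjsDiv_eq_zero_iff (hv0 : ∀ i ∈ t, 0 < v i) (hv1 : ∑ i ∈ t, v i = 1)
    (hp : ∀ i ∈ t, ∀ j, 0 ≤ p i j) :
    gjsDiv t v p = 0 ↔ ∀ i ∈ t, p i = fun j => ∑ i' ∈ t, v i' * p i' j := by
  have hjensen : ∀ j, negMulLog (∑ i ∈ t, v i * p i j) = ∑ i ∈ t, v i * negMulLog (p i j) ↔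
      ∀ i ∈ t, p i j = ∑ i' ∈ t, v i' * p i' j := fun j => by
    simpa only [smul_eq_mul] using
      strictConcaveOn_negMulLog.map_sum_eq_iff hv0 hv1 fun i hi => hp i hi j
  rw [gjsDiv_eq_sum, sum_eq_zero_iff_of_nonneg fun j _ => sub_nonneg.2
    (sum_mul_negMulLog_le_negMulLog_sum (fun i hi => (hv0 i hi).le) hv1 fun i hi => hp i hi j)]
  simp only [mem_univ, true_implies, sub_eq_zero, hjensen, funext_iff]
  exact ⟨fun h i hi j => h j i hi, fun h j i hi => h i hi j⟩

lemma shannonH_mix_sub_eq_jsDiv_add_gjsDiv {a : ℝ} (ha : a ≠ 1) (q : Fin K → ℝ)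
    (t : Finset ι) (w : ι → ℝ) (p : ι → Fin K → ℝ) :
    shannonH (fun j => a * q j + ∑ i ∈ t, w i * p i j) - a * shannonH q
        - ∑ i ∈ t, w i * shannonH (p i) =
      jsDiv a q (fun j => ∑ i ∈ t, w i / (1 - a) * p i j)
        + (1 - a) * gjsDiv t (fun i => w i / (1 - a)) p := by
  have hs : 1 - a ≠ 0 := sub_ne_zero.2 ha.symm
  have hmix : (fun j => a * q j + (1 - a) * ∑ i ∈ t, w i / (1 - a) * p i j) =
      fun j => a * q j + ∑ i ∈ t, w i * p i j := by
    funext j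
    rw [mul_sum]
    congr 1
    exact sum_congr rfl fun i _ => by field_simp
  rw [jsDiv, hmix, gjsDiv, mul_sub, mul_sum (s := t)]
  simp only [← mul_assoc, mul_div_cancel₀ _ hs]
  ring

end GeneralizedJensenShannon

section Mixture

variable {ι : Type*} {K : ℕ} {t : Finset ι} {v : ι → ℝ} {p : ι → Fin K → ℝ} {a : ℝ}

lemma sum_sum_mul_eq_one (hv1 : ∑ i ∈ t, v i = 1) (hp1 : ∀ i ∈ t, ∑ j, p i j = 1) :
    ∑ j, ∑ i ∈ t, v i * p i j = 1 := by
  rw [sum_comm, ← hv1]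
  exact sum_congr rfl fun i hi => by rw [← mul_sum, hp1 i hi, mul_one]

lemma sum_jsDiv_onehot_uniform_le_add_gjsDiv (ha0 : 0 < a) (ha1 : a < 1)
    (hv0 : ∀ i ∈ t, 0 ≤ v i) (hv1 : ∑ i ∈ t, v i = 1) (hp0 : ∀ i ∈ t, ∀ j, 0 ≤ p i j)
    (hp1 : ∀ i ∈ t, ∑ j, p i j = 1) :
    ∑ k, jsDiv a (onehot k) (fun _ : Fin K => (1 : ℝ) / K) ≤
      ∑ k, jsDiv a (onehot k) (fun j => ∑ i ∈ t, v i * p i j) + K * ((1 - a) * gjsDiv t v p) :=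
  le_add_of_le_of_nonneg
    (sum_jsDiv_onehot_uniform_le ha0 ha1
      (fun j => sum_nonneg fun i hi => mul_nonneg (hv0 i hi) (hp0 i hi j))
      (sum_sum_mul_eq_one hv1 hp1))
    (mul_nonneg K.cast_nonneg (mul_nonneg (by linarith) (gjsDiv_nonneg hv0 hv1 hp0)))

lemma sum_jsDiv_onehot_add_gjsDiv_eq_uniform_iff (ha0 : 0 < a) (ha1 : a < 1)
    (hv0 : ∀ i ∈ t, 0 < v i) (hv1 : ∑ i ∈ t, v i = 1) (hp0 : ∀ i ∈ t, ∀ j, 0 ≤ p i j)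
    (hp1 : ∀ i ∈ t, ∑ j, p i j = 1) :
    ∑ k, jsDiv a (onehot k) (fun j => ∑ i ∈ t, v i * p i j) + K * ((1 - a) * gjsDiv t v p) =
        ∑ k, jsDiv a (onehot k) (fun _ : Fin K => (1 : ℝ) / K) ↔
      ∀ i ∈ t, p i = fun _ : Fin K => (1 : ℝ) / K := by
  set r := fun j => ∑ i ∈ t, v i * p i j
  have hr0 : ∀ j, 0 ≤ r j := fun j => sum_nonneg fun i hi => mul_nonneg (hv0 i hi).le (hp0 i hi j)
  have hr1 : ∑ j, r j = 1 := sum_sum_mul_eq_one hv1 hp1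
  have hK : (K : ℝ) ≠ 0 := Nat.cast_ne_zero.2 (by rintro rfl; simp at hr1)
  have hgap : 0 ≤ K * ((1 - a) * gjsDiv t v p) := mul_nonneg K.cast_nonneg
    (mul_nonneg (by linarith) (gjsDiv_nonneg (fun i hi => (hv0 i hi).le) hv1 hp0))
  have hJS := sum_jsDiv_onehot_uniform_le ha0 ha1 hr0 hr1
  rw [← sub_eq_zero, add_sub_right_comm, add_eq_zero_iff_of_nonneg (sub_nonneg.2 hJS) hgap,
    sub_eq_zero, sum_jsDiv_onehot_eq_uniform_iff ha0 ha1 hr0 hr1, mul_eq_zero, mul_eq_zero,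
    or_iff_right hK, or_iff_right (by linarith), gjsDiv_eq_zero_iff hv0 hv1 hp0]
  constructor
  · rintro ⟨hr, hpr⟩ i hi
    exact (hpr i hi).trans hr
  · intro hpu
    have hr : r = fun _ : Fin K => (1 : ℝ) / K := by
      funext j
      calc ∑ i ∈ t, v i * p i j = ∑ i ∈ t, v i * (1 / K) :=
            sum_congr rfl fun i hi => by rw [hpu i hi]
        _ = 1 / K := by rw [← sum_mul, hv1, one_mul]
    exact ⟨hr, fun i hi => (hpu i hi).trans hr.symm⟩

end Mixture

theorem gjs_sum_lower_bound_general {K M : ℕ} [NeZero M] (hM : 3 ≤ M)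
    (w : Fin M → ℝ) (hw : ∀ i, 0 < w i) (hw1 : ∑ i, w i = 1)
    (p : Fin M → Fin K → ℝ)
    (hp : ∀ i : Fin M, i ≠ 0 → (∀ k, 0 ≤ p i k) ∧ ∑ k, p i k = 1) :
    (∑ k : Fin K, (shannonH (fun j => w 0 * onehot k j + (1 - w 0) * ((1 : ℝ) / K))
            - w 0 * shannonH (onehot k)
            - (1 - w 0) * shannonH (fun _ : Fin K => (1 : ℝ) / K)))
      ≤ ∑ k : Fin K, (shannonH (fun j => w 0 * onehot k j + ∑ i ∈ Finset.univ.erase 0, w i * p i j)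
            - w 0 * shannonH (onehot k)
            - ∑ i ∈ Finset.univ.erase 0, w i * shannonH (p i))
    ∧ ((∑ k : Fin K, (shannonH (fun j => w 0 * onehot k j + ∑ i ∈ Finset.univ.erase 0, w i * p i j)
            - w 0 * shannonH (onehot k)
            - ∑ i ∈ Finset.univ.erase 0, w i * shannonH (p i)))
        = (∑ k : Fin K, (shannonH (fun j => w 0 * onehot k j + (1 - w 0) * ((1 : ℝ) / K))
            - w 0 * shannonH (onehot k)
            - (1 - w 0) * shannonH (fun _ : Fin K => (1 : ℝ) / K)))
        ↔ ∀ i : Fin M, i ≠ 0 → p i = (fun _ : Fin K => (1 : ℝ) / K)) := by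
  set a := w 0
  set t := univ.erase (0 : Fin M)
  have hmem : ∀ {i}, i ∈ t ↔ i ≠ 0 := by simp [t]
  have hs : ∑ i ∈ t, w i = 1 - a := by
    rw [← hw1, ← add_sum_erase _ _ (mem_univ 0)]
    ring
  have ha1 : a < 1 := by
    have : 0 < ∑ i ∈ t, w i :=
      sum_pos (fun i _ => hw i) ⟨⟨1, by omega⟩, hmem.2 (by simp [Fin.ext_iff])⟩
    linarith
  have hv0 : ∀ i ∈ t, 0 < w i / (1 - a) := fun i _ => div_pos (hw i) (by linarith)
  have hv1 : ∑ i ∈ t, w i / (1 - a) = 1 := by rw [← sum_div, hs, div_self (by linarith)]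
  have hp0 : ∀ i ∈ t, ∀ j, 0 ≤ p i j := fun i hi => (hp i (hmem.1 hi)).1
  have hp1 : ∀ i ∈ t, ∑ j, p i j = 1 := fun i hi => (hp i (hmem.1 hi)).2
  change ∑ k, jsDiv a (onehot k) (fun _ : Fin K => (1 : ℝ) / K) ≤ _ ∧
    (_ = ∑ k, jsDiv a (onehot k) (fun _ : Fin K => (1 : ℝ) / K) ↔ _)
  simp only [shannonH_mix_sub_eq_jsDiv_add_gjsDiv ha1.ne, sum_add_distrib, sum_const, card_univ,
    Fintype.card_fin, nsmul_eq_mul]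
  refine ⟨sum_jsDiv_onehot_uniform_le_add_gjsDiv (hw 0) ha1 (fun i hi => (hv0 i hi).le) hv1 hp0 hp1,
    ?_⟩
  rw [sum_jsDiv_onehot_add_gjsDiv_eq_uniform_iff (hw 0) ha1 hv0 hv1 hp0 hp1]
  simp only [hmem]

theorem gjs_sum_lower_bound {K M : ℕ} [NeZero M] (hM : 3 ≤ M) (hK : 0 < K)
    (w : Fin M → ℝ) (hw : ∀ i, 0 < w i) (hw1 : ∑ i, w i = 1)
    (p : Fin M → Fin K → ℝ)
    (hp : ∀ i : Fin M, i ≠ 0 → (∀ k, 0 ≤ p i k) ∧ ∑ k, p i k = 1) :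
    (∑ k : Fin K, (shannonH (fun j => w 0 * onehot k j + (1 - w 0) * ((1 : ℝ) / K))
            - w 0 * shannonH (onehot k)
            - (1 - w 0) * shannonH (fun _ : Fin K => (1 : ℝ) / K)))
      ≤ ∑ k : Fin K, (shannonH (fun j => w 0 * onehot k j + ∑ i ∈ Finset.univ.erase 0, w i * p i j)
            - w 0 * shannonH (onehot k)
            - ∑ i ∈ Finset.univ.erase 0, w i * shannonH (p i))
    ∧ ((∑ k : Fin K, (shannonH (fun j => w 0 * onehot k j + ∑ i ∈ Finset.univ.erase 0, w i * p i j)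
            - w 0 * shannonH (onehot k)
            - ∑ i ∈ Finset.univ.erase 0, w i * shannonH (p i)))
        = (∑ k : Fin K, (shannonH (fun j => w 0 * onehot k j + (1 - w 0) * ((1 : ℝ) / K))
            - w 0 * shannonH (onehot k)
            - (1 - w 0) * shannonH (fun _ : Fin K => (1 : ℝ) / K)))
        ↔ ∀ i : Fin M, i ≠ 0 → p i = (fun _ : Fin K => (1 : ℝ) / K)) :=
  gjs_sum_lower_bound_general hM w hw hw1 p hp
end Entropy
end

section
/- (Risk-difference bound under symmetric noise) Let L be a loss satisfying B_L ≤ ∑_{i=1}^K L(e_i, x, f) ≤ B_U for all x and f. Under uniform (symmetric) label noise with rate η < 1 − 1/K, the noisy risk satisfies R^η_L(f) = (1 − ηK/(K−1))·R_L(f) + (η/(K−1))·E[∑_{i=1}^K L(e_i, x, f)]. Consequently, if f* minimizes R_L and f*_η minimizes R^η_L, then 0 ≤ R^η_L(f*) − R^η_L(f*_η) ≤ η(B_U − B_L)/(K−1) and −η(B_U − B_L)/(K−1−ηK) ≤ R_L(f*) − R_L(f*_η) ≤ 0. -/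
open Real Finset MeasureTheory

theorem symmetric_noise_risk_bound
    {X F Ω : Type*} [MeasurableSpace Ω]
    (μ : Measure Ω) [IsProbabilityMeasure μ]
    {K : ℕ} (hK : 2 ≤ K)
    (x : Ω → X) (y : Ω → Fin K)
    (L : Fin K → X → F → ℝ)
    (BL BU : ℝ)
    (hbounds : ∀ (a : X) (f : F), BL ≤ ∑ i, L i a f ∧ ∑ i, L i a f ≤ BU)
    (η : ℝ) (hη0 : 0 ≤ η) (hη : η < 1 - 1 / K)
    (Fcl : Set F) (fstar feta : F) (hfs : fstar ∈ Fcl) (hfe : feta ∈ Fcl)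
    (hint : ∀ f ∈ Fcl, Integrable (fun ω => L (y ω) (x ω) f) μ)
    (hint' : ∀ f ∈ Fcl, ∀ i : Fin K, Integrable (fun ω => L i (x ω) f) μ) :
    let R : F → ℝ := fun f => ∫ ω, L (y ω) (x ω) f ∂μ
    let Rη : F → ℝ := fun f => ∫ ω,
      ((1 - η) * L (y ω) (x ω) f
        + (η / ((K : ℝ) - 1)) * ∑ i ∈ Finset.univ.erase (y ω), L i (x ω) f) ∂μ
    (∀ g ∈ Fcl, R fstar ≤ R g) → (∀ g ∈ Fcl, Rη feta ≤ Rη g) →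
    (∀ f ∈ Fcl, Rη f = (1 - η * K / ((K : ℝ) - 1)) * R f
        + (η / ((K : ℝ) - 1)) * ∫ ω, (∑ i, L i (x ω) f) ∂μ)
    ∧ 0 ≤ Rη fstar - Rη feta
    ∧ Rη fstar - Rη feta ≤ η * (BU - BL) / ((K : ℝ) - 1)
    ∧ -(η * (BU - BL) / ((K : ℝ) - 1 - η * K)) ≤ R fstar - R feta
    ∧ R fstar - R feta ≤ 0 := by
  intro R Rη hmin hmineta
  have hK2 : (2:ℝ) ≤ (K:ℝ) := by exact_mod_cast hK
  have hKpos : (0:ℝ) < (K:ℝ) - 1 := by linarith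
  have hKp : (0:ℝ) < (K:ℝ) := by linarith
  have hηK : η * K < (K:ℝ) - 1 := by
    have h1 : ((1:ℝ) - 1 / K) * K = (K:ℝ) - 1 := by field_simp
    nlinarith
  set c : ℝ := 1 - η * K / ((K:ℝ) - 1) with hc
  clear_value c
  have hcpos : 0 < c := by
    rw [hc, sub_pos, div_lt_one hKpos]; exact hηK
  have key : ∀ f ∈ Fcl, Rη f = c * R f + (η / ((K:ℝ) - 1)) * ∫ ω, (∑ i, L i (x ω) f) ∂μ := by
    intro f hf
    have hS : Integrable (fun ω => ∑ i, L i (x ω) f) μ :=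
      integrable_finset_sum _ (fun i _ => hint' f hf i)
    have hL := hint f hf
    have heq : ∀ ω, (1 - η) * L (y ω) (x ω) f
        + (η / ((K:ℝ) - 1)) * ∑ i ∈ Finset.univ.erase (y ω), L i (x ω) f
        = c * L (y ω) (x ω) f + (η / ((K:ℝ) - 1)) * ∑ i, L i (x ω) f := by
      intro ω
      rw [Finset.sum_erase_eq_sub (Finset.mem_univ _), hc]
      field_simp
      ring
    show (∫ ω, ((1 - η) * L (y ω) (x ω) f
        + (η / ((K:ℝ) - 1)) * ∑ i ∈ Finset.univ.erase (y ω), L i (x ω) f) ∂μ) = _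
    rw [integral_congr_ae (Filter.Eventually.of_forall heq),
      integral_add (hL.const_mul c) (hS.const_mul _), integral_const_mul, integral_const_mul]
  have hSb : ∀ f ∈ Fcl, BL ≤ (∫ ω, (∑ i, L i (x ω) f) ∂μ)
      ∧ (∫ ω, (∑ i, L i (x ω) f) ∂μ) ≤ BU := by
    intro f hf
    have hS : Integrable (fun ω => ∑ i, L i (x ω) f) μ :=
      integrable_finset_sum _ (fun i _ => hint' f hf i)
    constructor
    · have := integral_mono (integrable_const BL) hS (fun ω => (hbounds (x ω) f).1)
      simpa using this
    · have := integral_mono hS (integrable_const BU) (fun ω => (hbounds (x ω) f).2)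
      simpa using this
  refine ⟨key, ?_, ?_, ?_, ?_⟩
  · linarith [hmineta fstar hfs]
  · have h1 := key fstar hfs
    have h2 := key feta hfe
    have hR := hmin feta hfe
    have hs1 := hSb fstar hfs
    have hs2 := hSb feta hfe
    have hηn : 0 ≤ η / ((K:ℝ) - 1) := div_nonneg hη0 hKpos.le
    have hA : c * R fstar ≤ c * R feta := mul_le_mul_of_nonneg_left hR hcpos.le
    have hB : η / ((K:ℝ) - 1) * ((∫ ω, (∑ i, L i (x ω) fstar) ∂μ)
        - (∫ ω, (∑ i, L i (x ω) feta) ∂μ)) ≤ η / ((K:ℝ) - 1) * (BU - BL) :=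
      mul_le_mul_of_nonneg_left (by linarith [hs1.2, hs2.1]) hηn
    have hrhs : η * (BU - BL) / ((K:ℝ) - 1) = η / ((K:ℝ) - 1) * (BU - BL) := by ring
    rw [h1, h2, hrhs]
    rw [mul_sub] at hB
    linarith [hA, hB]
  · have h1 := key fstar hfs
    have h2 := key feta hfe
    have hRη := hmineta fstar hfs
    have hs1 := hSb fstar hfs
    have hs2 := hSb feta hfe
    have hηn : 0 ≤ η / ((K:ℝ) - 1) := div_nonneg hη0 hKpos.le
    -- c * (R fstar - R feta) = (Rη fstar - Rη feta) - (η/(K-1)) * (S1 - S2)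
    have hdiff : c * (R fstar - R feta)
        = (Rη fstar - Rη feta) - (η / ((K:ℝ) - 1)) * ((∫ ω, (∑ i, L i (x ω) fstar) ∂μ)
            - (∫ ω, (∑ i, L i (x ω) feta) ∂μ)) := by
      rw [h1, h2]; ring
    have hlb : c * (R fstar - R feta) ≥ -((η / ((K:ℝ) - 1)) * (BU - BL)) := by
      have : (η / ((K:ℝ) - 1)) * ((∫ ω, (∑ i, L i (x ω) fstar) ∂μ)
          - (∫ ω, (∑ i, L i (x ω) feta) ∂μ)) ≤ (η / ((K:ℝ) - 1)) * (BU - BL) :=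
        mul_le_mul_of_nonneg_left (by linarith [hs1.2, hs2.1]) hηn
      linarith
    have hcK : c * ((K:ℝ) - 1) = (K:ℝ) - 1 - η * K := by
      rw [hc]; field_simp
    have hrw : c * (η * (BU - BL) / ((K:ℝ) - 1 - η * K)) = η / ((K:ℝ) - 1) * (BU - BL) := by
      rw [← hcK]
      field_simp
    have key2 : c * (-(η * (BU - BL) / ((K:ℝ) - 1 - η * K))) ≤ c * (R fstar - R feta) := by
      rw [mul_neg, hrw]
      linarith
    exact le_of_mul_le_mul_left key2 hcpos
  · linarith [hmin feta hfe]
end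

section
/- (Asymmetric-noise risk bound) Let L satisfy: (i) L(e_i, p₂,…,p_M) = 0 iff all p_j = e_i; (ii) 0 ≤ L ≤ C₁; (iii) L(e_i, e_j,…,e_j) = C₂ ≤ C₁ for i ≠ j; and B_L ≤ ∑_{i=1}^K L(e_i, x, f) ≤ B_U for all x, f. Under class-dependent noise with flip probabilities η_{ij} satisfying η_{ij} < 1 − η_{ii} for all i ≠ j, if the minimizer f* of the clean risk has R_L(f*) = 0, then 0 ≤ R^η_L(f*) − R^η_L(f*_η) ≤ (B_U − B_L)·E_D[1 − η_{yy}] + (C₁ − C₂)·E_D[∑_{i≠y}(1 − η_{yy} − η_{yi})]. -/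
/-!
Since `R(f*) = 0`, condition (i) forces `f*` to predict the one-hot true label almost surely, so
by (iii) its losses are `0` at the true label `y` and `C₂` elsewhere: its noisy risk is
`C₂ E[1 - η_yy]`, and the upper sum bound at `f*` gives `(K - 1) C₂ ≤ B_U`. For any `f`, write the
noisy loss as `(1 - η_yy) ∑ᵢ L_i - ∑_{i ≠ y} (1 - η_yy - η_yi) L_i`; the lower sum bound and
`L ≤ C₁` (the weights being nonnegative) bound it from below, which gives the claim pointwise.

The label `y` is not assumed measurable. If `C₂ ≠ 0`, its fibres are a.e. the zero sets of the
integrable losses of `f*`, which makes all integrands integrable; if `C₂ = 0`, the noisy risk of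
`f*` vanishes and the bound is nonnegative.
-/

open Real Finset MeasureTheory

section NoisyLoss

variable {ι : Type*} [Fintype ι] [DecidableEq ι]

/-- The integrand of the noisy risk `R^η_L` at a sample with clean label `c`, flip probabilities
`r = η_c` and losses `g i = L(e_i, x, f)`. -/
def noisyLoss (r : ι → ℝ) (c : ι) (g : ι → ℝ) : ℝ :=
  (1 - r c) * g c + ∑ j ∈ univ.erase c, r j * g j

variable {r : ι → ℝ} {c : ι}

lemma sum_erase_eq_one_sub (hr : ∑ j, r j = 1) : ∑ j ∈ univ.erase c, r j = 1 - r c := by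
  rw [sum_erase_eq_sub (mem_univ c), hr]

lemma one_sub_nonneg_of_sum_eq_one (hr0 : ∀ j, 0 ≤ r j) (hr : ∑ j, r j = 1) : 0 ≤ 1 - r c :=
  sum_erase_eq_one_sub (c := c) hr ▸ sum_nonneg fun j _ => hr0 j

lemma sum_ite_eq_zero_else (C : ℝ) :
    ∑ i, (if i = c then 0 else C) = ((Fintype.card ι : ℝ) - 1) * C := by
  rw [← add_sum_erase _ _ (mem_univ c), if_pos rfl, zero_add,
    sum_congr rfl fun i hi => if_neg (ne_of_mem_erase hi), sum_const,
    card_erase_of_mem (mem_univ c), card_univ, nsmul_eq_mul,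
    Nat.cast_sub (Fintype.card_pos_iff.2 ⟨c⟩), Nat.cast_one]

lemma noisyLoss_ite_eq_zero_else (hr : ∑ j, r j = 1) (C : ℝ) :
    noisyLoss r c (fun i => if i = c then 0 else C) = C * (1 - r c) := by
  rw [noisyLoss, if_pos rfl, mul_zero, zero_add,
    sum_congr rfl fun i hi => by rw [if_neg (ne_of_mem_erase hi)], ← sum_mul,
    sum_erase_eq_one_sub hr, mul_comm]

lemma noisyLoss_nonneg (hr0 : ∀ j, 0 ≤ r j) (hr : ∑ j, r j = 1) {g : ι → ℝ}
    (hg : ∀ j, 0 ≤ g j) : 0 ≤ noisyLoss r c g :=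
  add_nonneg (mul_nonneg (one_sub_nonneg_of_sum_eq_one hr0 hr) (hg c))
    (sum_nonneg fun j _ => mul_nonneg (hr0 j) (hg j))

lemma sum_erase_one_sub_sub_nonneg (hdom : ∀ j, j ≠ c → r j ≤ 1 - r c) :
    0 ≤ ∑ j ∈ univ.erase c, (1 - r c - r j) :=
  sum_nonneg fun j hj => sub_nonneg.2 (hdom j (ne_of_mem_erase hj))

lemma mul_one_sub_sub_noisyLoss_le {g : ι → ℝ} {C₁ C₂ BL BU : ℝ}
    (hr0 : ∀ j, 0 ≤ r j) (hr : ∑ j, r j = 1) (hdom : ∀ j, j ≠ c → r j ≤ 1 - r c)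
    (hg : ∀ j, g j ≤ C₁) (hBL : BL ≤ ∑ j, g j) (hBU : ((Fintype.card ι : ℝ) - 1) * C₂ ≤ BU) :
    C₂ * (1 - r c) - noisyLoss r c g
      ≤ (BU - BL) * (1 - r c) + (C₁ - C₂) * ∑ j ∈ univ.erase c, (1 - r c - r j) := by
  set t := 1 - r c
  have ht : 0 ≤ t := one_sub_nonneg_of_sum_eq_one hr0 hr
  have hsplit : noisyLoss r c g
      = t * ∑ j, g j - ∑ j ∈ univ.erase c, (t - r j) * g j := by
    simp only [noisyLoss, sub_mul, sum_sub_distrib, ← mul_sum, ← add_sum_erase _ g (mem_univ c)]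
    ring
  have hslack : ∑ j ∈ univ.erase c, (t - r j) = ((Fintype.card ι : ℝ) - 1) * t - t := by
    rw [sum_sub_distrib, sum_erase_eq_one_sub hr, sum_erase_eq_sub (mem_univ c), sum_const,
      card_univ, nsmul_eq_mul]
    ring
  have hwrong : ∑ j ∈ univ.erase c, (t - r j) * g j ≤ (∑ j ∈ univ.erase c, (t - r j)) * C₁ := by
    rw [sum_mul]
    exact sum_le_sum fun j hj =>
      mul_le_mul_of_nonneg_left (hg j) (sub_nonneg.2 (hdom j (ne_of_mem_erase hj)))
  have hlow := mul_le_mul_of_nonneg_left hBL ht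
  have hup := mul_le_mul_of_nonneg_left hBU ht
  rw [hslack] at hwrong
  rw [hsplit, hslack]
  linarith

end NoisyLoss

lemma integrable_apply_of_nullMeasurableSet_fiber {Ω ι E : Type*} [MeasurableSpace Ω]
    {μ : Measure Ω} [Fintype ι] [NormedAddCommGroup E] {y : Ω → ι}
    (hy : ∀ i, NullMeasurableSet {ω | y ω = i} μ) {F : ι → Ω → E}
    (hF : ∀ i, Integrable (F i) μ) : Integrable (fun ω => F (y ω) ω) μ := by
  classical
  have hsum : (fun ω => F (y ω) ω) = fun ω => ∑ i, {ω | y ω = i}.indicator (F i) ω := by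
    ext ω
    simp [Set.indicator_apply, eq_comm]
  rw [hsum]
  exact integrable_finsetSum _ fun i _ => (hF i).indicator₀ (hy i)

lemma integral_sub_le_of_ae_sub_le {Ω : Type*} [MeasurableSpace Ω] {μ : Measure Ω}
    {f g a b : Ω → ℝ} (hf : Integrable f μ) (hg : Integrable g μ) (ha : Integrable a μ)
    (hb : Integrable b μ) {A B : ℝ} (h : ∀ᵐ ω ∂μ, f ω - g ω ≤ A * a ω + B * b ω) :
    ∫ ω, f ω ∂μ - ∫ ω, g ω ∂μ ≤ A * ∫ ω, a ω ∂μ + B * ∫ ω, b ω ∂μ := by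
  rw [← integral_sub hf hg, ← integral_const_mul, ← integral_const_mul,
    ← integral_add (ha.const_mul A) (hb.const_mul B)]
  exact integral_mono_ae (hf.sub hg) ((ha.const_mul A).add (hb.const_mul B)) h

section NoisyRisk

variable {Ω ι : Type*} [MeasurableSpace Ω] {μ : Measure Ω} [DecidableEq ι] {y : Ω → ι}

lemma nullMeasurableSet_fiber_of_ae_eq_ite {g : ι → Ω → ℝ} (hg : ∀ i, AEMeasurable (g i) μ)
    {C : ℝ} (hC : C ≠ 0) (h : ∀ᵐ ω ∂μ, ∀ i, g i ω = if i = y ω then 0 else C) (i : ι) :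
    NullMeasurableSet {ω | y ω = i} μ := by
  refine ((hg i).nullMeasurableSet_preimage (measurableSet_singleton 0)).congr
    (Filter.eventuallyEq_set.2 ?_)
  filter_upwards [h] with ω hω
  simp [hω i, hC, eq_comm]

variable [Fintype ι] {η : ι → ι → ℝ}

lemma integrable_noisyLoss {g : ι → Ω → ℝ} (hg : ∀ j, Integrable (g j) μ) (r : ι → ℝ) (c : ι) :
    Integrable (fun ω => noisyLoss r c (fun j => g j ω)) μ :=
  ((hg c).const_mul _).add (integrable_finsetSum _ fun j _ => (hg j).const_mul _)

lemma neg_integral_noisyLoss_le (hη0 : ∀ i j, 0 ≤ η i j) (hηrow : ∀ i, ∑ j, η i j = 1)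
    (hdom : ∀ i j, j ≠ i → η i j ≤ 1 - η i i) {g : ι → Ω → ℝ} {C₁ BL BU : ℝ}
    (hg : ∀ i ω, 0 ≤ g i ω) (hBLU : BL ≤ BU) (hC₁ : 0 ≤ C₁) :
    -∫ ω, noisyLoss (η (y ω)) (y ω) (fun i => g i ω) ∂μ
      ≤ (BU - BL) * ∫ ω, (1 - η (y ω) (y ω)) ∂μ
        + C₁ * ∫ ω, (∑ i ∈ univ.erase (y ω), (1 - η (y ω) (y ω) - η (y ω) i)) ∂μ := by
  have hloss : 0 ≤ ∫ ω, noisyLoss (η (y ω)) (y ω) (fun i => g i ω) ∂μ :=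
    integral_nonneg fun ω => noisyLoss_nonneg (hη0 _) (hηrow _) fun i => hg i ω
  have ha : 0 ≤ ∫ ω, (1 - η (y ω) (y ω)) ∂μ :=
    integral_nonneg fun ω => one_sub_nonneg_of_sum_eq_one (hη0 _) (hηrow _)
  have hb : 0 ≤ ∫ ω, (∑ i ∈ univ.erase (y ω), (1 - η (y ω) (y ω) - η (y ω) i)) ∂μ :=
    integral_nonneg fun ω => sum_erase_one_sub_sub_nonneg (hdom _)
  linarith [mul_nonneg (sub_nonneg.2 hBLU) ha, mul_nonneg hC₁ hb]

lemma mul_integral_sub_integral_noisyLoss_le [IsFiniteMeasure μ]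
    (hy : ∀ i, NullMeasurableSet {ω | y ω = i} μ)
    (hη0 : ∀ i j, 0 ≤ η i j) (hηrow : ∀ i, ∑ j, η i j = 1)
    (hdom : ∀ i j, j ≠ i → η i j ≤ 1 - η i i) {g : ι → Ω → ℝ} {C₁ C₂ BL BU : ℝ}
    (hg : ∀ i, Integrable (g i) μ) (hgC₁ : ∀ i ω, g i ω ≤ C₁) (hBL : ∀ ω, BL ≤ ∑ i, g i ω)
    (hBU : ((Fintype.card ι : ℝ) - 1) * C₂ ≤ BU) :
    C₂ * ∫ ω, (1 - η (y ω) (y ω)) ∂μ - ∫ ω, noisyLoss (η (y ω)) (y ω) (fun i => g i ω) ∂μ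
      ≤ (BU - BL) * ∫ ω, (1 - η (y ω) (y ω)) ∂μ
        + (C₁ - C₂) * ∫ ω, (∑ i ∈ univ.erase (y ω), (1 - η (y ω) (y ω) - η (y ω) i)) ∂μ := by
  have ha := integrable_apply_of_nullMeasurableSet_fiber hy (F := fun i _ => 1 - η i i)
    fun _ => integrable_const _
  rw [← integral_const_mul]
  refine integral_sub_le_of_ae_sub_le (ha.const_mul C₂)
    (integrable_apply_of_nullMeasurableSet_fiber hy
      (F := fun i ω => noisyLoss (η i) i fun j => g j ω) fun i => integrable_noisyLoss hg _ _) ha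
    (integrable_apply_of_nullMeasurableSet_fiber hy
      (F := fun i _ => ∑ j ∈ univ.erase i, (1 - η i i - η i j)) fun _ => integrable_const _)
    (ae_of_all _ fun ω => ?_)
  exact mul_one_sub_sub_noisyLoss_le (hη0 _) (hηrow _) (hdom _) (fun j => hgC₁ j ω) (hBL ω) hBU

end NoisyRisk

lemma loss_eq_ite_of_loss_eq_zero {K M : ℕ} {ℓ : (Fin K → ℝ) → (Fin M → Fin K → ℝ) → ℝ}
    {C₂ : ℝ} (hzero : ∀ i ps, ℓ (onehot i) ps = 0 → ∀ j, ps j = onehot i)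
    (hwrong : ∀ i j : Fin K, i ≠ j → ℓ (onehot i) (fun _ => onehot j) = C₂)
    {c : Fin K} {ps : Fin M → Fin K → ℝ} (hc : ℓ (onehot c) ps = 0) (i : Fin K) :
    ℓ (onehot i) ps = if i = c then 0 else C₂ := by
  split_ifs with hi
  · exact hi ▸ hc
  · rw [funext (hzero c ps hc)]
    exact hwrong i c hi

theorem asymmetric_noise_risk_bound_general
    {X F Ω : Type*} [MeasurableSpace Ω]
    (μ : Measure Ω) [IsProbabilityMeasure μ]
    {K M : ℕ}
    (x : Ω → X) (y : Ω → Fin K)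
    -- the loss takes a label distribution and M predictive distributions
    (ℓ : (Fin K → ℝ) → (Fin M → Fin K → ℝ) → ℝ)
    -- the predictions of a classifier f on input a
    (P : X → F → Fin M → Fin K → ℝ)
    (C₁ C₂ BL BU : ℝ)
    -- condition (i): the loss vanishes iff all predictions are the one-hot label
    (hcond1 : ∀ (i : Fin K) (ps : Fin M → Fin K → ℝ),
        ℓ (onehot i) ps = 0 ↔ ∀ j, ps j = onehot i)
    -- condition (ii): the loss is bounded between 0 and C₁
    (hcond2 : ∀ (i : Fin K) (ps : Fin M → Fin K → ℝ),
        0 ≤ ℓ (onehot i) ps ∧ ℓ (onehot i) ps ≤ C₁)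
    -- condition (iii): all predictions equal to a wrong one-hot give the constant C₂
    (hcond3 : ∀ i j : Fin K, i ≠ j → ℓ (onehot i) (fun _ => onehot j) = C₂)
    -- sum-over-labels bounds
    (hbounds : ∀ (a : X) (f : F), BL ≤ ∑ i, ℓ (onehot i) (P a f)
        ∧ ∑ i, ℓ (onehot i) (P a f) ≤ BU)
    -- class-dependent noise rates
    (η : Fin K → Fin K → ℝ) (hη0 : ∀ i j, 0 ≤ η i j)
    (hηrow : ∀ i, ∑ j, η i j = 1)
    (hηdom : ∀ i j : Fin K, i ≠ j → η i j < 1 - η i i)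
    (Fcl : Set F) (fstar feta : F) (hfs : fstar ∈ Fcl) (hfe : feta ∈ Fcl)
    (hint : ∀ f ∈ Fcl, Integrable (fun ω => ℓ (onehot (y ω)) (P (x ω) f)) μ)
    (hint' : ∀ f ∈ Fcl, ∀ i : Fin K, Integrable (fun ω => ℓ (onehot i) (P (x ω) f)) μ) :
    let R : F → ℝ := fun f => ∫ ω, ℓ (onehot (y ω)) (P (x ω) f) ∂μ
    let Rη : F → ℝ := fun f => ∫ ω,
      ((1 - η (y ω) (y ω)) * ℓ (onehot (y ω)) (P (x ω) f)
        + ∑ i ∈ Finset.univ.erase (y ω), η (y ω) i * ℓ (onehot i) (P (x ω) f)) ∂μ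
    (∀ g ∈ Fcl, R fstar ≤ R g) → (∀ g ∈ Fcl, Rη feta ≤ Rη g) →
    R fstar = 0 →
    0 ≤ Rη fstar - Rη feta
    ∧ Rη fstar - Rη feta
        ≤ (BU - BL) * (∫ ω, (1 - η (y ω) (y ω)) ∂μ)
          + (C₁ - C₂) * (∫ ω, (∑ i ∈ Finset.univ.erase (y ω),
              (1 - η (y ω) (y ω) - η (y ω) i)) ∂μ) := by
  intro R Rη _ hminη hR0
  refine ⟨sub_nonneg.2 (hminη fstar hfs), ?_⟩
  have hdom i j (hj : j ≠ i) : η i j ≤ 1 - η i i := (hηdom i j hj.symm).le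
  have hperfect : ∀ᵐ ω ∂μ, ∀ i, ℓ (onehot i) (P (x ω) fstar) = if i = y ω then 0 else C₂ := by
    filter_upwards [(integral_eq_zero_iff_of_nonneg (fun ω => (hcond2 _ _).1)
      (hint fstar hfs)).1 hR0] with ω hω
    exact loss_eq_ite_of_loss_eq_zero (fun i ps => (hcond1 i ps).1) hcond3 hω
  obtain ⟨ω₀, hω₀⟩ := hperfect.exists
  have hBU : ((Fintype.card (Fin K) : ℝ) - 1) * C₂ ≤ BU := by
    simpa only [hω₀, sum_ite_eq_zero_else] using (hbounds (x ω₀) fstar).2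
  have hRfstar : Rη fstar = C₂ * ∫ ω, (1 - η (y ω) (y ω)) ∂μ := by
    rw [← integral_const_mul]
    refine integral_congr_ae ?_
    filter_upwards [hperfect] with ω hω
    exact (congrArg _ (funext hω)).trans (noisyLoss_ite_eq_zero_else (hηrow _) _)
  rw [hRfstar]
  rcases eq_or_ne C₂ 0 with rfl | hC₂
  · have hB := hbounds (x ω₀) fstar
    have hC₁ := hcond2 (y ω₀) (P (x ω₀) fstar)
    rw [zero_mul, zero_sub, sub_zero]
    exact neg_integral_noisyLoss_le hη0 hηrow hdom (fun i ω => (hcond2 i (P (x ω) feta)).1)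
      (hB.1.trans hB.2) (hC₁.1.trans hC₁.2)
  · exact mul_integral_sub_integral_noisyLoss_le
      (nullMeasurableSet_fiber_of_ae_eq_ite (fun i => (hint' fstar hfs i).aemeasurable) hC₂
        hperfect)
      hη0 hηrow hdom (hint' feta hfe) (fun i ω => (hcond2 i _).2) (fun ω => (hbounds (x ω) feta).1)
      hBU

theorem asymmetric_noise_risk_bound
    {X F Ω : Type*} [MeasurableSpace Ω]
    (μ : Measure Ω) [IsProbabilityMeasure μ]
    {K M : ℕ}
    (x : Ω → X) (y : Ω → Fin K)
    -- the loss takes a label distribution and M predictive distributions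
    (ℓ : (Fin K → ℝ) → (Fin M → Fin K → ℝ) → ℝ)
    -- the predictions of a classifier f on input a
    (P : X → F → Fin M → Fin K → ℝ)
    (C₁ C₂ BL BU : ℝ) (hC : C₂ ≤ C₁)
    -- condition (i): the loss vanishes iff all predictions are the one-hot label
    (hcond1 : ∀ (i : Fin K) (ps : Fin M → Fin K → ℝ),
        ℓ (onehot i) ps = 0 ↔ ∀ j, ps j = onehot i)
    -- condition (ii): the loss is bounded between 0 and C₁
    (hcond2 : ∀ (i : Fin K) (ps : Fin M → Fin K → ℝ),
        0 ≤ ℓ (onehot i) ps ∧ ℓ (onehot i) ps ≤ C₁)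
    -- condition (iii): all predictions equal to a wrong one-hot give the constant C₂
    (hcond3 : ∀ i j : Fin K, i ≠ j → ℓ (onehot i) (fun _ => onehot j) = C₂)
    -- sum-over-labels bounds
    (hbounds : ∀ (a : X) (f : F), BL ≤ ∑ i, ℓ (onehot i) (P a f)
        ∧ ∑ i, ℓ (onehot i) (P a f) ≤ BU)
    -- class-dependent noise rates
    (η : Fin K → Fin K → ℝ) (hη0 : ∀ i j, 0 ≤ η i j)
    (hηrow : ∀ i, ∑ j, η i j = 1)
    (hηdom : ∀ i j : Fin K, i ≠ j → η i j < 1 - η i i)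
    (Fcl : Set F) (fstar feta : F) (hfs : fstar ∈ Fcl) (hfe : feta ∈ Fcl)
    (hint : ∀ f ∈ Fcl, Integrable (fun ω => ℓ (onehot (y ω)) (P (x ω) f)) μ)
    (hint' : ∀ f ∈ Fcl, ∀ i : Fin K, Integrable (fun ω => ℓ (onehot i) (P (x ω) f)) μ) :
    let R : F → ℝ := fun f => ∫ ω, ℓ (onehot (y ω)) (P (x ω) f) ∂μ
    let Rη : F → ℝ := fun f => ∫ ω,
      ((1 - η (y ω) (y ω)) * ℓ (onehot (y ω)) (P (x ω) f)
        + ∑ i ∈ Finset.univ.erase (y ω), η (y ω) i * ℓ (onehot i) (P (x ω) f)) ∂μ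
    (∀ g ∈ Fcl, R fstar ≤ R g) → (∀ g ∈ Fcl, Rη feta ≤ Rη g) →
    R fstar = 0 →
    0 ≤ Rη fstar - Rη feta
    ∧ Rη fstar - Rη feta
        ≤ (BU - BL) * (∫ ω, (1 - η (y ω) (y ω)) ∂μ)
          + (C₁ - C₂) * (∫ ω, (∑ i ∈ Finset.univ.erase (y ω),
              (1 - η (y ω) (y ω) - η (y ω) i)) ∂μ) :=
  asymmetric_noise_risk_bound_general μ x y ℓ P C₁ C₂ BL BU hcond1 hcond2 hcond3 hbounds η hη0 hηrow
    hηdom Fcl fstar feta hfs hfe hint hint'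
end

section
/- (JS → MAE as π₁ → 1) For a fixed probability vector p on K classes with p_y > 0, lim_{π₁→1⁻} D_JS_π(e_y, p) / h(1−π₁) = (1/2)·‖e_y − p‖₁ = 1 − p_y, where h(x) = −x log x. -/
open Real Finset Filter

private lemma term_eq {ε t : ℝ} (hε : 0 < ε) (ht : 0 ≤ t) :
    ε * t * Real.log (ε * t) = ε * t * Real.log ε + ε * t * Real.log t := by
  rcases eq_or_lt_of_le ht with h | h
  · simp [← h]
  · rw [Real.log_mul (ne_of_gt hε) (ne_of_gt h)]; ring

theorem js_tendsto_mae {K : ℕ} (p : Fin K → ℝ)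
    (hp : ∀ k, 0 ≤ p k) (hp1 : ∑ k, p k = 1)
    (y : Fin K) (hpy : 0 < p y) :
    Tendsto (fun a : ℝ =>
        (shannonH (fun k => a * onehot y k + (1 - a) * p k)
          - a * shannonH (onehot y) - (1 - a) * shannonH p)
        / (-((1 - a) * Real.log (1 - a))))
      (nhdsWithin 1 (Set.Ioo (0:ℝ) 1))
      (nhds ((1 / 2) * ∑ k, |onehot y k - p k|))
    ∧ (1 / 2) * ∑ k, |onehot y k - p k| = 1 - p y := by
  have hpy1 : p y ≤ 1 := hp1 ▸ Finset.single_le_sum (fun k _ => hp k) (Finset.mem_univ y)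
  have hsum_erase : ∑ k ∈ Finset.univ.erase y, p k = 1 - p y := by
    have h := Finset.sum_erase_add Finset.univ p (Finset.mem_univ y)
    rw [hp1] at h; linarith
  -- the ℓ¹ identity
  have habs : (1 / 2) * ∑ k, |onehot y k - p k| = 1 - p y := by
    have hs : ∑ k, |onehot y k - p k| = 2 * (1 - p y) := by
      rw [← Finset.sum_erase_add _ _ (Finset.mem_univ y)]
      have h1 : |onehot y y - p y| = 1 - p y := by
        have ho : onehot y y = 1 := by simp [onehot]
        rw [ho, abs_of_nonneg (by linarith)]
      have h2 : ∑ k ∈ Finset.univ.erase y, |onehot y k - p k| = 1 - p y := by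
        rw [← hsum_erase]
        apply Finset.sum_congr rfl
        intro k hk
        have hky : k ≠ y := Finset.ne_of_mem_erase hk
        simp only [onehot, if_neg hky]
        rw [abs_of_nonpos (by linarith [hp k])]; ring
      rw [h1, h2]; ring
    rw [hs]; ring
  have hH1 : shannonH (onehot y) = 0 := by
    unfold shannonH onehot
    apply Finset.sum_eq_zero
    intro k _
    by_cases h : k = y <;> simp [h]
  set L := nhdsWithin (1:ℝ) (Set.Ioo (0:ℝ) 1) with hL
  -- G a := (1-a)/(-((1-a) log(1-a))) tends to 0
  have hmaps : Tendsto (fun a : ℝ => 1 - a) L (nhdsWithin 0 (Set.Ioi 0)) := by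
    apply tendsto_nhdsWithin_of_tendsto_nhds_of_eventually_within
    · have h : Tendsto (fun a : ℝ => 1 - a) (nhds (1:ℝ)) (nhds 0) := by
        simpa using (continuous_sub_left (1:ℝ)).tendsto 1
      exact h.mono_left nhdsWithin_le_nhds
    · filter_upwards [self_mem_nhdsWithin] with a ha
      exact sub_pos.mpr ha.2
  have hlog : Tendsto (fun a : ℝ => Real.log (1 - a)) L atBot :=
    Real.tendsto_log_nhdsGT_zero.comp hmaps
  have hG0 : Tendsto (fun a : ℝ => -(Real.log (1 - a))⁻¹) L (nhds 0) := by
    have h1 : Tendsto (fun a : ℝ => -Real.log (1 - a)) L atTop :=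
      tendsto_neg_atBot_atTop.comp hlog
    have h2 := h1.inv_tendsto_atTop
    have h3 : (fun a : ℝ => (-Real.log (1 - a))⁻¹) = fun a : ℝ => -(Real.log (1 - a))⁻¹ := by
      funext a; rw [inv_neg]
    rw [← h3]
    exact h2
  have hGlim : Tendsto (fun a : ℝ => (1 - a) / (-((1 - a) * Real.log (1 - a)))) L (nhds 0) := by
    apply hG0.congr'
    filter_upwards [self_mem_nhdsWithin] with a ha
    have hε : (0:ℝ) < 1 - a := by linarith [ha.2]
    rw [← mul_neg, div_mul_cancel_left₀ hε.ne', inv_neg]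
  -- T1 squeeze
  have hT1 : Tendsto (fun a : ℝ =>
      (-((a + (1 - a) * p y) * Real.log (a + (1 - a) * p y)))
        / (-((1 - a) * Real.log (1 - a)))) L (nhds 0) := by
    have hub : Tendsto (fun a : ℝ =>
        (1 - p y) * ((1 - a) / (-((1 - a) * Real.log (1 - a))))) L (nhds 0) := by
      have := hGlim.const_mul (1 - p y)
      simpa using this
    apply tendsto_of_tendsto_of_tendsto_of_le_of_le' tendsto_const_nhds hub
    · filter_upwards [self_mem_nhdsWithin] with a ha
      have hε : (0:ℝ) < 1 - a := by linarith [ha.2]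
      have hl : Real.log (1 - a) < 0 := Real.log_neg hε (by linarith [ha.1])
      have hh : 0 < -((1 - a) * Real.log (1 - a)) := by nlinarith
      have hx : 0 < a + (1 - a) * p y := by nlinarith [ha.1, hp y]
      have hx1 : a + (1 - a) * p y ≤ 1 := by nlinarith
      have hlx : Real.log (a + (1 - a) * p y) ≤ 0 := Real.log_nonpos (le_of_lt hx) hx1
      apply div_nonneg _ (le_of_lt hh)
      nlinarith
    · filter_upwards [self_mem_nhdsWithin] with a ha
      have hε : (0:ℝ) < 1 - a := by linarith [ha.2]
      have hl : Real.log (1 - a) < 0 := Real.log_neg hε (by linarith [ha.1])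
      have hh : 0 < -((1 - a) * Real.log (1 - a)) := by nlinarith
      have hx : 0 < a + (1 - a) * p y := by nlinarith [ha.1, hp y]
      -- -log x ≤ 1/x - 1, hence -(x log x) ≤ 1 - x
      have hlb : Real.log ((a + (1 - a) * p y)⁻¹) ≤ (a + (1 - a) * p y)⁻¹ - 1 :=
        Real.log_le_sub_one_of_pos (inv_pos.mpr hx)
      rw [Real.log_inv] at hlb
      have hkey : -((a + (1 - a) * p y) * Real.log (a + (1 - a) * p y))
          ≤ 1 - (a + (1 - a) * p y) := by
        have h2 : (a + (1 - a) * p y) * (-(Real.log (a + (1 - a) * p y)))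
            ≤ (a + (1 - a) * p y) * ((a + (1 - a) * p y)⁻¹ - 1) :=
          mul_le_mul_of_nonneg_left hlb (le_of_lt hx)
        have h3 : (a + (1 - a) * p y) * ((a + (1 - a) * p y)⁻¹ - 1)
            = 1 - (a + (1 - a) * p y) := by
          field_simp
        nlinarith
      rw [div_le_iff₀ hh]
      calc -((a + (1 - a) * p y) * Real.log (a + (1 - a) * p y))
          ≤ 1 - (a + (1 - a) * p y) := hkey
        _ = (1 - p y) * (1 - a) := by ring
        _ = (1 - p y) * ((1 - a) / (-((1 - a) * Real.log (1 - a)))) * (-((1 - a) * Real.log (1 - a))) := by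
            rw [mul_assoc, div_mul_cancel₀ _ (ne_of_gt hh)]
  -- the algebraic identity on Ioo 0 1
  have key : ∀ a ∈ Set.Ioo (0:ℝ) 1,
      (shannonH (fun k => a * onehot y k + (1 - a) * p k)
        - a * shannonH (onehot y) - (1 - a) * shannonH p)
        / (-((1 - a) * Real.log (1 - a)))
      = (-((a + (1 - a) * p y) * Real.log (a + (1 - a) * p y)))
          / (-((1 - a) * Real.log (1 - a)))
        + (1 - p y)
        + ((1 - a) / (-((1 - a) * Real.log (1 - a)))) * (p y * Real.log (p y)) := by
    intro a ha
    have hε : (0:ℝ) < 1 - a := by linarith [ha.2]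
    have hl : Real.log (1 - a) < 0 := Real.log_neg hε (by linarith [ha.1])
    have hh : 0 < -((1 - a) * Real.log (1 - a)) := by nlinarith
    have hHp : shannonH p = -(p y * Real.log (p y))
        + ∑ k ∈ Finset.univ.erase y, -(p k * Real.log (p k)) := by
      unfold shannonH
      rw [← Finset.sum_erase_add _ _ (Finset.mem_univ y)]
      ring
    have hHq : shannonH (fun k => a * onehot y k + (1 - a) * p k)
        = -((a + (1 - a) * p y) * Real.log (a + (1 - a) * p y))
          + (1 - p y) * (-((1 - a) * Real.log (1 - a)))
          + (1 - a) * ∑ k ∈ Finset.univ.erase y, -(p k * Real.log (p k)) := by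
      unfold shannonH
      rw [← Finset.sum_erase_add _ _ (Finset.mem_univ y)]
      have hterm : ∀ k ∈ Finset.univ.erase y,
          -((a * onehot y k + (1 - a) * p k) * Real.log (a * onehot y k + (1 - a) * p k))
          = (-((1 - a) * Real.log (1 - a))) * p k + (1 - a) * (-(p k * Real.log (p k))) := by
        intro k hk
        have hky : k ≠ y := Finset.ne_of_mem_erase hk
        simp only [onehot, if_neg hky, mul_zero, zero_add]
        rw [term_eq hε (hp k)]
        ring
      rw [Finset.sum_congr rfl hterm, Finset.sum_add_distrib, ← Finset.mul_sum,
        ← Finset.mul_sum, hsum_erase]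
      have ho : onehot y y = 1 := by simp [onehot]
      simp only [ho]
      ring
    rw [hH1, hHq, hHp]
    field_simp [hε.ne', hl.ne]
    ring
  refine ⟨?_, habs⟩
  rw [habs]
  have hF : Tendsto (fun a : ℝ =>
      (-((a + (1 - a) * p y) * Real.log (a + (1 - a) * p y)))
        / (-((1 - a) * Real.log (1 - a)))
      + (1 - p y)
      + ((1 - a) / (-((1 - a) * Real.log (1 - a)))) * (p y * Real.log (p y))) L
      (nhds (1 - p y)) := by
    have h := (hT1.add (tendsto_const_nhds (x := (1 - p y)))).add
      (hGlim.mul_const (p y * Real.log (p y)))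
    simpa using h
  apply hF.congr'
  filter_upwards [self_mem_nhdsWithin] with a ha
  exact (key a ha).symm
end

section
/- (Sum-over-classes bounds for JS in the limit π₁→1) With π₂ = 1−π₁ and normalization Z = h(π₂) = −π₂ log π₂: (a) ∑_{k=1}^K D_JS_π(e_k, e_1)/Z = (K−1)(1 + h(π₁)/h(π₂)) and this tends to K−1 as π₁ → 1⁻; (b) ∑_{k=1}^K D_JS_π(e_k, u)/Z also tends to K−1 as π₁ → 1⁻, where u is the uniform distribution. Hence the normalized bound difference B_U − B_L tends to 0 as π₁ → 1⁻. -/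
open Real Finset Filter

/-- JS divergence with weights `[a, 1-a]`. -/
noncomputable def DJS {K : ℕ} (a : ℝ) (p q : Fin K → ℝ) : ℝ :=
  shannonH (fun k => a * p k + (1 - a) * q k) - a * shannonH p - (1 - a) * shannonH q

/-! The mixture of `e_k` and `e_1` has masses `a` and `1 - a`, so each off-diagonal term of the
first sum is the binary entropy `h(a) + h(1 - a)`. The mixture of `e_k` and `u` has one mass
`a + (1 - a)/K` and `K - 1` masses `(1 - a)/K`; since `h(b/K) = (h(b) + b log K)/K`, the second sum is
`K h(a + (1 - a)/K) + (K - 1) h(1 - a) - (1 - a) log K`. After division by `h(1 - a)` every other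
term vanishes as `a → 1⁻`: `h(x) ≤ 1 - x` bounds the entropy of a mass near `1` by `1 - a`, and
`(1 - a) / h(1 - a) = -1 / log (1 - a) → 0`. -/

open scoped Topology

namespace JensenShannon

lemma sum_ite_eq_add_mul {ι R : Type*} [Fintype ι] [DecidableEq ι] [CommRing R] (i : ι) (x y : R) :
    ∑ j, (if j = i then x else y) = x + (Fintype.card ι - 1) * y := by
  have split : ∀ j, (if j = i then x else y) = y + if j = i then x - y else 0 := by
    intro j; split_ifs <;> ring
  simp only [split, Finset.sum_add_distrib, Finset.sum_const, Finset.card_univ, nsmul_eq_mul,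
    Finset.sum_ite_eq', Finset.mem_univ, if_true]
  ring

lemma shannonH_eq_sum_negMulLog {K : ℕ} (p : Fin K → ℝ) : shannonH p = ∑ k, negMulLog (p k) := by
  simp [shannonH, negMulLog_eq_neg]

lemma shannonH_onehot {K : ℕ} (c : Fin K) : shannonH (onehot c) = 0 := by
  simp [shannonH_eq_sum_negMulLog, onehot, apply_ite negMulLog]

lemma negMulLog_div (b c : ℝ) : negMulLog (b / c) = (negMulLog b + b * log c) / c := by
  rw [div_eq_mul_inv, negMulLog_mul]
  simp only [negMulLog, log_inv]
  ring

lemma shannonH_uniform (K : ℕ) : shannonH (fun _ : Fin K => (1 : ℝ) / K) = log K := by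
  simp only [shannonH_eq_sum_negMulLog, negMulLog_div, negMulLog_one, zero_add, one_mul,
    Finset.sum_const, Finset.card_univ, Fintype.card_fin, nsmul_eq_mul]
  rcases eq_or_ne (K : ℝ) 0 with hK | hK
  · simp [hK]
  · field_simp

lemma DJS_onehot_onehot {K : ℕ} (a : ℝ) (k c : Fin K) :
    DJS a (onehot k) (onehot c) = if k = c then 0 else binEntropy a := by
  simp only [DJS, shannonH_onehot, mul_zero, sub_zero]
  split_ifs with hkc
  · subst hkc
    simpa [← add_mul] using shannonH_onehot k
  · rw [shannonH_eq_sum_negMulLog, Fintype.sum_eq_add k c hkc,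
      binEntropy_eq_negMulLog_add_negMulLog_one_sub]
    · simp [onehot, hkc, Ne.symm hkc]
    · rintro j ⟨hjk, hjc⟩
      simp [onehot, hjk, hjc]

lemma sum_DJS_onehot_onehot {K : ℕ} (a : ℝ) (c : Fin K) :
    ∑ k, DJS a (onehot k) (onehot c) = ((K : ℝ) - 1) * binEntropy a := by
  simp [DJS_onehot_onehot, sum_ite_eq_add_mul]

lemma shannonH_mix_onehot_uniform {K : ℕ} (a : ℝ) (k : Fin K) :
    shannonH (fun j => a * onehot k j + (1 - a) * ((1 : ℝ) / K))
      = negMulLog (a + (1 - a) / K) + ((K : ℝ) - 1) * negMulLog ((1 - a) / K) := by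
  have entry : ∀ j, a * onehot k j + (1 - a) * ((1 : ℝ) / K)
      = if j = k then a + (1 - a) / K else (1 - a) / K := by
    intro j; by_cases hjk : j = k <;> simp [onehot, hjk, div_eq_mul_inv]
  simp only [shannonH_eq_sum_negMulLog, entry, apply_ite negMulLog, sum_ite_eq_add_mul,
    Fintype.card_fin]

lemma DJS_onehot_uniform {K : ℕ} (a : ℝ) (k : Fin K) :
    DJS a (onehot k) (fun _ => (1 : ℝ) / K)
      = negMulLog (a + (1 - a) / K) + ((K : ℝ) - 1) * negMulLog ((1 - a) / K)
        - (1 - a) * log K := by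
  rw [DJS, shannonH_mix_onehot_uniform, shannonH_onehot, shannonH_uniform]
  ring

lemma sum_DJS_onehot_uniform {K : ℕ} (hK : 0 < K) (a : ℝ) :
    ∑ k, DJS a (onehot k) (fun _ : Fin K => (1 : ℝ) / K)
      = K * negMulLog (a + (1 - a) / K) + ((K : ℝ) - 1) * negMulLog (1 - a) - (1 - a) * log K := by
  have hK' : (K : ℝ) ≠ 0 := by positivity
  simp only [DJS_onehot_uniform, Finset.sum_const, Finset.card_univ, Fintype.card_fin, nsmul_eq_mul,
    negMulLog_div]
  field_simp
  ring

lemma negMulLog_pos {x : ℝ} (h0 : 0 < x) (h1 : x < 1) : 0 < negMulLog x := by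
  rw [negMulLog, neg_mul, neg_pos]
  exact mul_neg_of_pos_of_neg h0 (log_neg h0 h1)

lemma tendsto_self_div_negMulLog_nhdsGT_zero :
    Tendsto (fun b => b / negMulLog b) (𝓝[>] 0) (𝓝 0) := by
  have h : Tendsto (fun b => -(log b)⁻¹) (𝓝[>] 0) (𝓝 0) := by
    simpa using tendsto_log_nhdsGT_zero.inv_tendsto_atBot.neg
  refine h.congr' (eventually_nhdsWithin_of_forall fun b (hb : 0 < b) => ?_)
  simp only [negMulLog, neg_mul, div_neg, div_mul_cancel_left₀ hb.ne']

lemma tendsto_negMulLog_div_negMulLog {α : Type*} {l : Filter α} {x b : α → ℝ}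
    (hb : Tendsto b l (𝓝[>] 0)) (hx : ∀ᶠ t in l, 0 ≤ x t ∧ x t ≤ 1 ∧ 1 - x t ≤ b t) :
    Tendsto (fun t => negMulLog (x t) / negMulLog (b t)) l (𝓝 0) := by
  have hb01 : ∀ᶠ t in l, b t ∈ Set.Ioo 0 1 := hb (Ioo_mem_nhdsGT one_pos)
  refine tendsto_of_tendsto_of_tendsto_of_le_of_le' tendsto_const_nhds
    (tendsto_self_div_negMulLog_nhdsGT_zero.comp hb) ?_ ?_
  · filter_upwards [hx, hb01] with t ⟨hx0, hx1, _⟩ ⟨hb0, hb1⟩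
    exact div_nonneg (negMulLog_nonneg hx0 hx1) (negMulLog_pos hb0 hb1).le
  · filter_upwards [hx, hb01] with t ⟨hx0, _, hxb⟩ ⟨hb0, hb1⟩
    exact div_le_div_of_nonneg_right ((negMulLog_le_one_sub_self hx0).trans hxb)
      (negMulLog_pos hb0 hb1).le

lemma tendsto_one_sub_nhdsWithin_Ioo :
    Tendsto (fun a : ℝ => 1 - a) (𝓝[Set.Ioo 0 1] 1) (𝓝[>] 0) := by
  refine tendsto_nhdsWithin_iff.2 ⟨?_, eventually_nhdsWithin_of_forall fun a ha => sub_pos.2 ha.2⟩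
  exact ((continuous_const.sub continuous_id).tendsto' 1 0 (sub_self 1)).mono_left
    nhdsWithin_le_nhds

lemma negMulLog_one_sub_pos {a : ℝ} (ha : a ∈ Set.Ioo 0 1) : 0 < negMulLog (1 - a) :=
  negMulLog_pos (sub_pos.2 ha.2) (sub_lt_self 1 ha.1)

lemma tendsto_negMulLog_div_negMulLog_one_sub {x : ℝ → ℝ}
    (hx : ∀ a ∈ Set.Ioo (0 : ℝ) 1, a ≤ x a ∧ x a ≤ 1) :
    Tendsto (fun a => negMulLog (x a) / negMulLog (1 - a)) (𝓝[Set.Ioo 0 1] 1) (𝓝 0) :=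
  tendsto_negMulLog_div_negMulLog tendsto_one_sub_nhdsWithin_Ioo
    (eventually_nhdsWithin_of_forall fun a ha =>
      ⟨ha.1.le.trans (hx a ha).1, (hx a ha).2, by linarith [(hx a ha).1]⟩)

lemma sum_DJS_onehot_onehot_div {K : ℕ} (c : Fin K) {a : ℝ} (ha : a ∈ Set.Ioo 0 1) :
    (∑ k, DJS a (onehot k) (onehot c)) / negMulLog (1 - a)
      = ((K : ℝ) - 1) * (1 + negMulLog a / negMulLog (1 - a)) := by
  rw [sum_DJS_onehot_onehot, binEntropy_eq_negMulLog_add_negMulLog_one_sub]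
  field_simp [(negMulLog_one_sub_pos ha).ne']
  ring

lemma tendsto_sum_DJS_onehot_onehot_div {K : ℕ} (c : Fin K) :
    Tendsto (fun a => (∑ k, DJS a (onehot k) (onehot c)) / negMulLog (1 - a))
      (𝓝[Set.Ioo 0 1] 1) (𝓝 ((K : ℝ) - 1)) := by
  have h := ((tendsto_const_nhds (x := (1 : ℝ))).add
    (tendsto_negMulLog_div_negMulLog_one_sub (x := id) fun a ha => ⟨le_rfl, ha.2.le⟩)).const_mul
    ((K : ℝ) - 1)
  rw [add_zero, mul_one] at h
  exact h.congr' (eventually_nhdsWithin_of_forall fun a ha => (sum_DJS_onehot_onehot_div c ha).symm)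

lemma tendsto_sum_DJS_onehot_uniform_div {K : ℕ} (hK : 0 < K) :
    Tendsto (fun a => (∑ k, DJS a (onehot k) (fun _ : Fin K => (1 : ℝ) / K)) / negMulLog (1 - a))
      (𝓝[Set.Ioo 0 1] 1) (𝓝 ((K : ℝ) - 1)) := by
  have h_mass : ∀ a ∈ Set.Ioo (0 : ℝ) 1, a ≤ a + (1 - a) / K ∧ a + (1 - a) / K ≤ 1 := by
    intro a ha
    have hb : 0 ≤ 1 - a := sub_nonneg.2 ha.2.le
    exact ⟨le_add_of_nonneg_right (div_nonneg hb K.cast_nonneg),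
      by linarith [div_le_self hb (Nat.one_le_cast.2 hK : (1 : ℝ) ≤ K)]⟩
  have h_log : Tendsto (fun a => (1 - a) / negMulLog (1 - a)) (𝓝[Set.Ioo 0 1] 1) (𝓝 0) :=
    tendsto_self_div_negMulLog_nhdsGT_zero.comp tendsto_one_sub_nhdsWithin_Ioo
  have h := (((tendsto_negMulLog_div_negMulLog_one_sub h_mass).const_mul (K : ℝ)).add
    (tendsto_const_nhds (x := (K : ℝ) - 1))).sub (h_log.const_mul (log K))
  rw [mul_zero, mul_zero, zero_add, sub_zero] at h
  refine h.congr' (eventually_nhdsWithin_of_forall fun a ha => ?_)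
  dsimp only
  rw [sum_DJS_onehot_uniform hK]
  field_simp [(negMulLog_one_sub_pos ha).ne']

end JensenShannon

open JensenShannon in
theorem js_bounds_coincide_in_limit {K : ℕ} (hK : 0 < K) :
    (∀ a ∈ Set.Ioo (0:ℝ) 1,
        (∑ k, DJS a (onehot k) (onehot ⟨0, hK⟩)) / (-((1 - a) * Real.log (1 - a)))
          = ((K : ℝ) - 1) * (1 + (-(a * Real.log a)) / (-((1 - a) * Real.log (1 - a)))))
    ∧ Tendsto (fun a : ℝ =>
        (∑ k, DJS a (onehot k) (onehot ⟨0, hK⟩)) / (-((1 - a) * Real.log (1 - a))))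
      (nhdsWithin 1 (Set.Ioo (0:ℝ) 1)) (nhds ((K : ℝ) - 1))
    ∧ Tendsto (fun a : ℝ =>
        (∑ k, DJS a (onehot k) (fun _ : Fin K => (1 : ℝ) / K)) / (-((1 - a) * Real.log (1 - a))))
      (nhdsWithin 1 (Set.Ioo (0:ℝ) 1)) (nhds ((K : ℝ) - 1))
    ∧ Tendsto (fun a : ℝ =>
        (∑ k, DJS a (onehot k) (onehot ⟨0, hK⟩)) / (-((1 - a) * Real.log (1 - a)))
          - (∑ k, DJS a (onehot k) (fun _ : Fin K => (1 : ℝ) / K))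
              / (-((1 - a) * Real.log (1 - a))))
      (nhdsWithin 1 (Set.Ioo (0:ℝ) 1)) (nhds 0) := by
  have h_negMulLog : ∀ x : ℝ, -(x * log x) = negMulLog x := fun x => by rw [negMulLog, neg_mul]
  simp only [h_negMulLog]
  have lim_onehot := tendsto_sum_DJS_onehot_onehot_div (⟨0, hK⟩ : Fin K)
  have lim_uniform := tendsto_sum_DJS_onehot_uniform_div hK
  exact ⟨fun a ha => sum_DJS_onehot_onehot_div _ ha, lim_onehot, lim_uniform,
    by simpa using lim_onehot.sub lim_uniform⟩
end
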